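/- Let φ(s) = (2π)^{-1/2} e^{−s²/2}, σ > 0, g_σ(μ) = σ^{-1} φ(μ/σ), f(x) = (1+σ²)^{-1/2} φ(x/√(1+σ²)), and H_j(s) = (1/√(j!)) e^{s²/2} (d/ds)^j e^{−s²/2}. Then for all integers j, k ≥ 1, ∫_ℝ (∫_ℝ φ(x−μ) g_σ(μ) H_j(μ/σ) dμ)(∫_ℝ φ(x−μ) g_σ(μ) H_k(μ/σ) dμ) f(x)^{-1} dx = δ_{jk} (σ²/(1+σ²))^j. Consequently, in the exponential family g_η(μ) = g_σ(μ) exp[Σ_{j=1}^p η_j H_j(μ/σ) − ψ(η)], the X-sample Fisher information matrix at η = 0 is diagonal with entries (1+σ^{-2})^{-1}, …, (1+σ^{-2})^{-p}. -/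

import Mathlib

/-- The standard Gaussian density `φ(s) = (2π)^{-1/2} e^{-s²/2}`. -/
noncomputable def gaussDens (s : ℝ) : ℝ :=
  (Real.sqrt (2 * Real.pi))⁻¹ * Real.exp (-s ^ 2 / 2)

/-- The normalized Hermite polynomials
`H_j(s) = (1/√(j!)) e^{s²/2} (d/ds)^j e^{-s²/2}`. -/
noncomputable def hermiteN (j : ℕ) (s : ℝ) : ℝ :=
  (Real.sqrt (Nat.factorial j))⁻¹ * Real.exp (s ^ 2 / 2) *
    iteratedDeriv j (fun u => Real.exp (-u ^ 2 / 2)) s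

/-! Write `He_n` for the probabilists' Hermite polynomials, so that `H_n = (-1)ⁿ He_n / √n!`.
Completing the square, `φ(x - μ) g_σ(μ)` is the marginal density `f(x)` times the posterior
`N(m, c²)` density of `μ`, where `c = σ / √(1 + σ²)`. Integrating `H_j(μ/σ)` against that posterior
is a Gaussian smoothing `E[H_j(c y + b Z)]` with `b² + c² = 1`, which Stein's identity
`E[Z P(Z)] = E[P'(Z)]` and the three-term recurrence evaluate to `cʲ H_j(y)`. The outer integral
is then `c^(j+k)` times the orthonormality integral `∫ φ H_j H_k = δ_jk`. -/

open Polynomial MeasureTheory Real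
open scoped Nat

noncomputable def hermiteReal (n : ℕ) : ℝ[X] := (hermite n).map (Int.castRingHom ℝ)

lemma hermiteReal_zero : hermiteReal 0 = 1 := by
  simp [hermiteReal]

lemma hermiteReal_one : hermiteReal 1 = X := by
  simp [hermiteReal]

lemma hermiteReal_succ (n : ℕ) :
    hermiteReal (n + 1) = X * hermiteReal n - derivative (hermiteReal n) := by
  simp [hermiteReal, hermite_succ, derivative_map]

lemma derivative_hermiteReal_succ (n : ℕ) :
    derivative (hermiteReal (n + 1)) = C ((n : ℝ) + 1) * hermiteReal n := by
  induction n with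
  | zero => simp [hermiteReal_one, hermiteReal_zero]
  | succ n ih =>
    have h : derivative (hermiteReal n) = X * hermiteReal n - hermiteReal (n + 1) := by
      rw [hermiteReal_succ n]; ring
    rw [hermiteReal_succ (n + 1), derivative_sub, derivative_mul, derivative_X, ih,
      derivative_C_mul, h]
    push_cast
    simp only [C_add, C_1]
    ring

lemma hermiteReal_succ_succ (n : ℕ) :
    hermiteReal (n + 2) = X * hermiteReal (n + 1) - C ((n : ℝ) + 1) * hermiteReal n := by
  rw [hermiteReal_succ (n + 1), derivative_hermiteReal_succ]

lemma hermiteN_eq (n : ℕ) (s : ℝ) :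
    hermiteN n s = (-1) ^ n / √(n ! : ℝ) * (hermiteReal n).eval s := by
  have hexp : (fun u : ℝ => exp (-u ^ 2 / 2)) = fun u => exp (-(u ^ 2 / 2)) := by
    simp only [neg_div]
  have hcancel : exp (s ^ 2 / 2) * exp (-(s ^ 2 / 2)) = 1 := by
    rw [← exp_add, add_neg_cancel, exp_zero]
  rw [hermiteN, hexp, iteratedDeriv_eq_iterate, deriv_gaussian_eq_hermite_mul_gaussian,
    hermiteReal, eval_map, aeval_def, algebraMap_int_eq]
  linear_combination ((-1) ^ n / √(n ! : ℝ) * eval₂ (Int.castRingHom ℝ) s (hermite n)) * hcancel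

lemma gaussDens_pos (s : ℝ) : 0 < gaussDens s := by
  unfold gaussDens; positivity

lemma integral_gaussDens : ∫ s, gaussDens s = 1 := by
  have h : ∫ s : ℝ, exp (-s ^ 2 / 2) = √(2 * π) := by
    convert integral_gaussian (1 / 2) using 2 <;> ring_nf
  simp only [gaussDens, integral_const_mul, h]
  exact inv_mul_cancel₀ (by positivity)

lemma hasDerivAt_gaussDens (s : ℝ) : HasDerivAt gaussDens (-s * gaussDens s) s := by
  have h : HasDerivAt (fun u : ℝ => -u ^ 2 / 2) (-s) s :=
    ((hasDerivAt_pow 2 s).neg.div_const 2).congr_deriv (by norm_num; ring)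
  unfold gaussDens
  exact (h.exp.const_mul (√(2 * π))⁻¹).congr_deriv (by ring)

lemma integrable_gaussDens_mul_eval (P : ℝ[X]) :
    Integrable fun z => gaussDens z * P.eval z := by
  induction P using Polynomial.induction_on' with
  | add P Q hP hQ =>
    simp only [eval_add, mul_add]
    exact hP.add hQ
  | monomial n a =>
    have h := integrable_rpow_mul_exp_neg_mul_sq (b := 1 / 2) (by norm_num)
      (s := n) (by linarith [(Nat.cast_nonneg n : (0 : ℝ) ≤ n)])
    convert h.const_mul ((√(2 * π))⁻¹ * a) using 2 with z
    simp only [gaussDens, eval_monomial, rpow_natCast]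
    ring_nf

noncomputable def gaussExpect : ℝ[X] →ₗ[ℝ] ℝ where
  toFun P := ∫ z, gaussDens z * P.eval z
  map_add' P Q := by
    simp only [eval_add, mul_add]
    exact integral_add (integrable_gaussDens_mul_eval P) (integrable_gaussDens_mul_eval Q)
  map_smul' r P := by
    simp only [eval_smul, smul_eq_mul, RingHom.id_apply, mul_left_comm _ r,
      integral_const_mul]

lemma gaussExpect_apply (P : ℝ[X]) : gaussExpect P = ∫ z, gaussDens z * P.eval z := rfl

lemma gaussExpect_C_mul (r : ℝ) (P : ℝ[X]) : gaussExpect (C r * P) = r * gaussExpect P := by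
  rw [← smul_eq_C_mul, map_smul, smul_eq_mul]

lemma gaussExpect_one : gaussExpect 1 = 1 := by
  simp only [gaussExpect_apply, eval_one, mul_one, integral_gaussDens]

/-- Stein's identity: integrate `(φ P)' = φ (P' - X P)` over `ℝ`. -/
lemma gaussExpect_X_mul (P : ℝ[X]) : gaussExpect (X * P) = gaussExpect (derivative P) := by
  have hderiv (z : ℝ) : HasDerivAt (fun z => gaussDens z * P.eval z)
      (gaussDens z * (derivative P - X * P).eval z) z := by
    refine ((hasDerivAt_gaussDens z).mul (P.hasDerivAt z)).congr_deriv ?_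
    simp only [eval_sub, eval_mul, eval_X]
    ring
  have h := integral_eq_zero_of_hasDerivAt_of_integrable hderiv
    (integrable_gaussDens_mul_eval _) (integrable_gaussDens_mul_eval P)
  rw [← gaussExpect_apply, map_sub, sub_eq_zero] at h
  exact h.symm

lemma gaussExpect_hermiteReal_mul_hermiteReal (j k : ℕ) :
    gaussExpect (hermiteReal j * hermiteReal k) = if j = k then (j ! : ℝ) else 0 := by
  induction j generalizing k with
  | zero =>
    cases k with
    | zero => simp [hermiteReal_zero, gaussExpect_one]
    | succ k =>
      rw [hermiteReal_zero, one_mul, hermiteReal_succ, map_sub, gaussExpect_X_mul, sub_self,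
        if_neg (Nat.zero_ne_add_one k)]
  | succ j ih =>
    have hshift : gaussExpect (hermiteReal (j + 1) * hermiteReal k)
        = gaussExpect (hermiteReal j * derivative (hermiteReal k)) := by
      rw [hermiteReal_succ, sub_mul, map_sub, mul_assoc, gaussExpect_X_mul, derivative_mul,
        map_add, add_sub_cancel_left]
    rw [hshift]
    cases k with
    | zero => simp [hermiteReal_zero]
    | succ k =>
      rw [derivative_hermiteReal_succ, mul_left_comm, gaussExpect_C_mul, ih]
      by_cases hjk : j = k
      · subst hjk
        simp [Nat.factorial_succ]
      · simp [hjk]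

/-- In the recurrence `He_{n+2} = X He_{n+1} - (n+1) He_n`, Stein's identity turns the `b X` term
into `b² (n+1)` times the `He_n` term, and `b² = 1 - c²`. -/
lemma gaussExpect_hermiteReal_comp {b c : ℝ} (hbc : c ^ 2 + b ^ 2 = 1) (y : ℝ) (n : ℕ) :
    gaussExpect ((hermiteReal n).comp (C (c * y) + C b * X))
      = c ^ n * (hermiteReal n).eval y := by
  set q : ℝ[X] := C (c * y) + C b * X
  induction n using Nat.twoStepInduction with
  | zero => simp [hermiteReal_zero, gaussExpect_one]
  | one =>
    rw [hermiteReal_one, X_comp, map_add, gaussExpect_C_mul, ← mul_one (C (c * y)),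
      gaussExpect_C_mul, gaussExpect_one, ← mul_one X, gaussExpect_X_mul]
    simp
  | more n ih ih1 =>
    have hdq : derivative ((hermiteReal (n + 1)).comp q)
        = C b * (C ((n : ℝ) + 1) * (hermiteReal n).comp q) := by
      rw [derivative_comp, derivative_hermiteReal_succ, mul_comp, C_comp]
      simp [q]
    have hcomp : (hermiteReal (n + 2)).comp q
        = C (c * y) * (hermiteReal (n + 1)).comp q + C b * (X * (hermiteReal (n + 1)).comp q)
          - C ((n : ℝ) + 1) * (hermiteReal n).comp q := by
      rw [hermiteReal_succ_succ, sub_comp, mul_comp, X_comp, mul_comp, C_comp]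
      ring
    rw [hcomp, map_sub, map_add, gaussExpect_C_mul, gaussExpect_C_mul, gaussExpect_C_mul,
      gaussExpect_X_mul, hdq, gaussExpect_C_mul, gaussExpect_C_mul, ih, ih1,
      hermiteReal_succ_succ, eval_sub, eval_mul, eval_X, eval_mul, eval_C]
    linear_combination ((n + 1) * c ^ n * (hermiteReal n).eval y) * hbc

lemma integral_gaussDens_mul_hermiteN_mul_hermiteN (j k : ℕ) :
    ∫ u, gaussDens u * (hermiteN j u * hermiteN k u) = if j = k then 1 else 0 := by
  simp only [hermiteN_eq]
  have h (u : ℝ) : gaussDens u * ((-1) ^ j / √(j ! : ℝ) * (hermiteReal j).eval u *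
      ((-1) ^ k / √(k ! : ℝ) * (hermiteReal k).eval u)) = (-1) ^ j / √(j ! : ℝ) *
      ((-1) ^ k / √(k ! : ℝ)) * (gaussDens u * (hermiteReal j * hermiteReal k).eval u) := by
    rw [eval_mul]; ring
  simp only [h, integral_const_mul, ← gaussExpect_apply, gaussExpect_hermiteReal_mul_hermiteReal]
  split_ifs with hjk
  · subst hjk
    have hfac : (0 : ℝ) < j ! := by positivity
    field_simp
    rw [← pow_mul, Even.neg_one_pow ⟨j, by ring⟩, one_mul, sq_sqrt hfac.le]
  · rw [mul_zero]

lemma integral_gaussDens_mul_hermiteN_affine {b c : ℝ} (hbc : c ^ 2 + b ^ 2 = 1) (n : ℕ)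
    (y : ℝ) : ∫ z, gaussDens z * hermiteN n (c * y + b * z) = c ^ n * hermiteN n y := by
  have h := gaussExpect_hermiteReal_comp hbc y n
  simp only [gaussExpect_apply, eval_comp, eval_add, eval_mul, eval_C, eval_X] at h
  simp only [hermiteN_eq, mul_left_comm (gaussDens _), integral_const_mul, h]
  ring

lemma integral_comp_sub_div (G : ℝ → ℝ) (m c : ℝ) :
    ∫ μ, G ((μ - m) / c) = |c| * ∫ z, G z := by
  rw [integral_sub_right_eq_self (fun t => G (t / c)) m, Measure.integral_comp_div, smul_eq_mul]

/-- Completing the square, the joint density of `(x, μ)` is the `N(0, τ²)` marginal density of `x`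
times the `N(m, c²)` posterior density of `μ`, where `τ² = 1 + σ²`, `c = σ / τ`, `m = σ² x / τ²`;
then substitute `μ = m + c z`. -/
lemma integral_gaussDens_sub_mul_gaussDens_div {σ : ℝ} (hσ : 0 < σ) (F : ℝ → ℝ) (x : ℝ) :
    ∫ μ, gaussDens (x - μ) * (σ⁻¹ * gaussDens (μ / σ)) * F (μ / σ) =
      (√(1 + σ ^ 2))⁻¹ * gaussDens (x / √(1 + σ ^ 2)) *
        ∫ z, gaussDens z * F (σ / √(1 + σ ^ 2) * (x / √(1 + σ ^ 2)) + (√(1 + σ ^ 2))⁻¹ * z) := by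
  set τ := √(1 + σ ^ 2)
  have hτ : τ ^ 2 = 1 + σ ^ 2 := sq_sqrt (by positivity)
  have hτ0 : 0 < τ := sqrt_pos.2 (by positivity)
  set c := σ / τ
  have hc0 : 0 < c := div_pos hσ hτ0
  set m := σ ^ 2 * x / τ ^ 2
  have hsquare (μ : ℝ) : gaussDens (x - μ) * (σ⁻¹ * gaussDens (μ / σ)) =
      τ⁻¹ * gaussDens (x / τ) * (c⁻¹ * gaussDens ((μ - m) / c)) := by
    have hexp : exp (-(x - μ) ^ 2 / 2) * exp (-(μ / σ) ^ 2 / 2) =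
        exp (-(x / τ) ^ 2 / 2) * exp (-((μ - m) / c) ^ 2 / 2) := by
      rw [← exp_add, ← exp_add]
      congr 1
      simp only [c, m, div_pow, hτ]
      field_simp
      ring
    have hστ : σ⁻¹ = τ⁻¹ * c⁻¹ := by
      simp only [c]; field_simp
    unfold gaussDens
    rw [hστ]
    linear_combination ((√(2 * π))⁻¹ * (√(2 * π))⁻¹ * τ⁻¹ * c⁻¹) * hexp
  have harg (μ : ℝ) : c * (x / τ) + τ⁻¹ * ((μ - m) / c) = μ / σ := by
    simp only [c, m]
    field_simp
    rw [hτ]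
    ring
  calc ∫ μ, gaussDens (x - μ) * (σ⁻¹ * gaussDens (μ / σ)) * F (μ / σ)
      = ∫ μ, τ⁻¹ * gaussDens (x / τ) * c⁻¹ *
          (fun z => gaussDens z * F (c * (x / τ) + τ⁻¹ * z)) ((μ - m) / c) := by
        simp only [hsquare, harg]
        congr 1 with μ
        ring
    _ = τ⁻¹ * gaussDens (x / τ) * ∫ z, gaussDens z * F (c * (x / τ) + τ⁻¹ * z) := by
        rw [integral_const_mul,
          integral_comp_sub_div (fun z => gaussDens z * F (c * (x / τ) + τ⁻¹ * z)),
          abs_of_pos hc0, ← mul_assoc, mul_assoc _ c⁻¹, inv_mul_cancel₀ hc0.ne', mul_one]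

lemma integral_gaussDens_sub_mul_hermiteN {σ : ℝ} (hσ : 0 < σ) (j : ℕ) (x : ℝ) :
    ∫ μ, gaussDens (x - μ) * (σ⁻¹ * gaussDens (μ / σ)) * hermiteN j (μ / σ) =
      (√(1 + σ ^ 2))⁻¹ * gaussDens (x / √(1 + σ ^ 2)) *
        ((σ / √(1 + σ ^ 2)) ^ j * hermiteN j (x / √(1 + σ ^ 2))) := by
  have hτ : √(1 + σ ^ 2) ^ 2 = 1 + σ ^ 2 := sq_sqrt (by positivity)
  have hunit : (σ / √(1 + σ ^ 2)) ^ 2 + (√(1 + σ ^ 2))⁻¹ ^ 2 = 1 := by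
    rw [div_pow, inv_pow, hτ]
    field_simp
    ring
  rw [integral_gaussDens_sub_mul_gaussDens_div hσ,
    integral_gaussDens_mul_hermiteN_affine hunit]

lemma fisherInformation_hermiteN {σ : ℝ} (hσ : 0 < σ) (j k : ℕ) :
    ∫ x, (∫ μ, gaussDens (x - μ) * (σ⁻¹ * gaussDens (μ / σ)) * hermiteN j (μ / σ)) *
        (∫ μ, gaussDens (x - μ) * (σ⁻¹ * gaussDens (μ / σ)) * hermiteN k (μ / σ)) *
        ((√(1 + σ ^ 2))⁻¹ * gaussDens (x / √(1 + σ ^ 2)))⁻¹ =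
      if j = k then (σ ^ 2 / (1 + σ ^ 2)) ^ j else 0 := by
  simp only [integral_gaussDens_sub_mul_hermiteN hσ]
  set τ := √(1 + σ ^ 2)
  have hτ : τ ^ 2 = 1 + σ ^ 2 := sq_sqrt (by positivity)
  have hτ0 : 0 < τ := sqrt_pos.2 (by positivity)
  set c := σ / τ
  have hpt (x : ℝ) : τ⁻¹ * gaussDens (x / τ) * (c ^ j * hermiteN j (x / τ)) *
      (τ⁻¹ * gaussDens (x / τ) * (c ^ k * hermiteN k (x / τ))) * (τ⁻¹ * gaussDens (x / τ))⁻¹ =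
      c ^ (j + k) * τ⁻¹ *
        (fun u => gaussDens u * (hermiteN j u * hermiteN k u)) (x / τ) := by
    have hφ := gaussDens_pos (x / τ)
    field_simp
    ring
  simp only [hpt, integral_const_mul]
  rw [Measure.integral_comp_div (fun u => gaussDens u * (hermiteN j u * hermiteN k u)),
    integral_gaussDens_mul_hermiteN_mul_hermiteN, abs_of_pos hτ0, smul_eq_mul]
  split_ifs with hjk
  · subst hjk
    rw [← two_mul, pow_mul, div_pow, hτ]
    field_simp
  · simp

/-- The diagonal Fisher information computation of Theorem 2: with the Gaussian carrier
`g(μ) = σ⁻¹φ(μ/σ)` and marginal `f(x) = (1+σ²)^{-1/2}φ(x/√(1+σ²))`, for all `j,k ≥ 1`,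
`∫ (∫ φ(x−μ) g(μ) H_j(μ/σ) dμ)(∫ φ(x−μ) g(μ) H_k(μ/σ) dμ) f(x)⁻¹ dx
   = δ_{jk} (σ²/(1+σ²))^j`.
Consequently, in the exponential family with statistics `H_1(μ/σ), …, H_p(μ/σ)`, the
`X`-sample Fisher information matrix at `η = 0` is diagonal with entries
`(1+σ⁻²)⁻¹, …, (1+σ⁻²)⁻ᵖ`. -/
theorem stmt_10 (σ : ℝ) (hσ : 0 < σ) (p : ℕ)
    (g f : ℝ → ℝ)
    (hg : ∀ μ, g μ = σ⁻¹ * gaussDens (μ / σ))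
    (hf : ∀ x, f x = (Real.sqrt (1 + σ ^ 2))⁻¹ * gaussDens (x / Real.sqrt (1 + σ ^ 2))) :
    (∀ j k : ℕ, 1 ≤ j → 1 ≤ k →
      ∫ x : ℝ,
          (∫ μ : ℝ, gaussDens (x - μ) * g μ * hermiteN j (μ / σ)) *
            (∫ μ : ℝ, gaussDens (x - μ) * g μ * hermiteN k (μ / σ)) * (f x)⁻¹
        = if j = k then (σ ^ 2 / (1 + σ ^ 2)) ^ j else 0) ∧
    (Matrix.of (fun j k : Fin p =>
        ∫ x : ℝ,
          (∫ μ : ℝ, gaussDens (x - μ) * g μ * hermiteN (j.1 + 1) (μ / σ)) *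
            (∫ μ : ℝ, gaussDens (x - μ) * g μ * hermiteN (k.1 + 1) (μ / σ)) * (f x)⁻¹)
      = Matrix.diagonal (fun j : Fin p => ((1 + σ⁻¹ ^ 2)⁻¹) ^ (j.1 + 1))) := by
  obtain rfl : g = fun μ => σ⁻¹ * gaussDens (μ / σ) := funext hg
  obtain rfl : f = fun x => (√(1 + σ ^ 2))⁻¹ * gaussDens (x / √(1 + σ ^ 2)) := funext hf
  refine ⟨fun j k _ _ => fisherInformation_hermiteN hσ j k, ?_⟩
  have hentry : (1 + σ⁻¹ ^ 2)⁻¹ = σ ^ 2 / (1 + σ ^ 2) := by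
    field_simp
    ring
  ext j k
  simp only [Matrix.of_apply, fisherInformation_hermiteN hσ, Matrix.diagonal_apply, hentry,
    Nat.add_right_cancel_iff, Fin.val_inj]
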